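/- For a pure state P_Ψ on ℂ^{m₁} ⊗ ℂ^{m₂} (the projection onto a unit vector Ψ), P_Ψ is separable if and only if its partial transposition P_Ψ^{T₂} is positive semidefinite, and this holds if and only if Ψ is a product vector ψ ⊗ φ. -/

import Mathlib

open scoped ComplexOrder
open Matrix Kronecker

noncomputable section

/-- A quantum state: a positive semidefinite complex matrix of trace 1. -/
def IsState {n : Type*} [Fintype n] [DecidableEq n] (ρ : Matrix n n ℂ) : Prop :=
  ρ.PosSemidef ∧ ρ.trace = 1

/-- Separability: membership in the closure of the convex hull of Kronecker
products of states. -/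
def IsSepState {m₁ m₂ : ℕ}
    (ρ : Matrix (Fin m₁ × Fin m₂) (Fin m₁ × Fin m₂) ℂ) : Prop :=
  ρ ∈ closure (convexHull ℝ
    {σ : Matrix (Fin m₁ × Fin m₂) (Fin m₁ × Fin m₂) ℂ |
      ∃ (A : Matrix (Fin m₁) (Fin m₁) ℂ) (B : Matrix (Fin m₂) (Fin m₂) ℂ),
        IsState A ∧ IsState B ∧ σ = A ⊗ₖ B})

/-- The rank-one operator `|ψ⟩⟨ψ|` (orthogonal projection on `span ψ` for unit `ψ`). -/
def proj {n : Type*} (ψ : n → ℂ) : Matrix n n ℂ :=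
  fun i j => ψ i * star (ψ j)

/-- The tensor (Kronecker) product of two vectors. -/
def tens {m₁ m₂ : ℕ} (ψ : Fin m₁ → ℂ) (φ : Fin m₂ → ℂ) :
    Fin m₁ × Fin m₂ → ℂ := fun p => ψ p.1 * φ p.2

/-- Partial transposition on the second factor. -/
def pt₂ {m₁ m₂ : ℕ} (ρ : Matrix (Fin m₁ × Fin m₂) (Fin m₁ × Fin m₂) ℂ) :
    Matrix (Fin m₁ × Fin m₂) (Fin m₁ × Fin m₂) ℂ :=
  fun p q => ρ (p.1, q.2) (q.1, p.2)

/-!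
Partial transposition is linear and continuous and sends a product state `A ⊗ B` to the positive
matrix `A ⊗ Bᵀ`, so it maps the closed convex hull of product states into the closed convex cone
of positive semidefinite matrices. Conversely, evaluating the quadratic form of `P_Ψ^{T₂}` at
`x (k, μ) = conj (δ_{kj} Ψ (i, μ) - δ_{ki} Ψ (j, μ))` gives minus the sum of the squared moduli of
the `2 × 2` minors `Ψ (i, μ) Ψ (j, ν) - Ψ (j, μ) Ψ (i, ν)` of the coefficient matrix of `Ψ`.
Positivity forces all these minors to vanish, so the coefficient matrix has rank at most one and
`Ψ` is a product vector `ψ ⊗ φ`. Finally `P_{ψ ⊗ φ} = P_ψ ⊗ P_φ`, a product of states once the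
factors are rescaled by `tr P_ψ`.
-/

section PosSemidef

variable {n : Type*}

theorem isClosed_setOf_posSemidef [Fintype n] : IsClosed {M : Matrix n n ℂ | M.PosSemidef} := by
  have hform : ∀ x : n → ℂ, Continuous fun M : Matrix n n ℂ => star x ⬝ᵥ M *ᵥ x := fun x =>
    continuous_const.dotProduct (continuous_id.matrix_mulVec continuous_const)
  have hset : {M : Matrix n n ℂ | M.PosSemidef} =
      {M | Mᴴ = M} ∩ ⋂ x : n → ℂ, {M | 0 ≤ star x ⬝ᵥ M *ᵥ x} := by
    ext M
    simp only [Set.mem_inter_iff, Set.mem_iInter]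
    exact posSemidef_iff_dotProduct_mulVec
  rw [hset]
  exact (isClosed_eq continuous_id.matrix_conjTranspose continuous_id).inter
    (isClosed_iInter fun x => isClosed_le continuous_const (hform x))

theorem convex_setOf_posSemidef : Convex ℝ {M : Matrix n n ℂ | M.PosSemidef} :=
  fun _ hA _ hB _ _ ha hb _ => (hA.smul ha).add (hB.smul hb)

theorem posSemidef_proj [Finite n] (v : n → ℂ) : (proj v).PosSemidef :=
  posSemidef_vecMulVec_self_star v

theorem trace_proj [Fintype n] (v : n → ℂ) : (proj v).trace = ∑ i, (‖v i‖ : ℂ) ^ 2 := by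
  simp [trace, proj, Complex.mul_conj']

end PosSemidef

theorem exists_eq_mul_of_mul_eq_mul {α β K : Type*} [Field K] (f : α → β → K)
    (h : ∀ i j μ ν, f i μ * f j ν = f j μ * f i ν) :
    ∃ (u : α → K) (v : β → K), ∀ i μ, f i μ = u i * v μ := by
  rcases eq_or_ne f 0 with rfl | h0
  · exact ⟨0, 0, by simp⟩
  obtain ⟨i₀, μ₀, hne⟩ : ∃ i μ, f i μ ≠ 0 := by simpa [funext_iff] using h0
  refine ⟨fun i => f i μ₀, fun μ => f i₀ μ / f i₀ μ₀, fun i μ => ?_⟩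
  field_simp
  linear_combination h i i₀ μ μ₀

theorem eq_zero_of_nonneg_sum_mul_star_swap {n : Type*} [Fintype n] (M : n → n → ℂ)
    (hM : ∀ μ ν, M ν μ = -M μ ν) (h : 0 ≤ ∑ μ, ∑ ν, M μ ν * star (M ν μ)) : M = 0 := by
  have hterm : ∀ p ∈ (Finset.univ : Finset (n × n)), 0 ≤ M p.1 p.2 * star (M p.1 p.2) :=
    fun _ _ => mul_star_self_nonneg _
  have hswap : ∑ μ, ∑ ν, M μ ν * star (M ν μ) = -∑ p : n × n, M p.1 p.2 * star (M p.1 p.2) := by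
    rw [Fintype.sum_prod_type, ← Finset.sum_neg_distrib]
    refine Finset.sum_congr rfl fun μ _ => ?_
    rw [← Finset.sum_neg_distrib]
    exact Finset.sum_congr rfl fun ν _ => by rw [hM μ ν, star_neg, mul_neg]
  have hsum : ∑ p : n × n, M p.1 p.2 * star (M p.1 p.2) = 0 :=
    le_antisymm (neg_nonneg.mp (hswap ▸ h)) (Finset.sum_nonneg hterm)
  ext μ ν
  simpa using (Finset.sum_eq_zero_iff_of_nonneg hterm).mp hsum (μ, ν) (Finset.mem_univ _)

section PartialTranspose

variable {m₁ m₂ : ℕ}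

theorem pt₂_kronecker (A : Matrix (Fin m₁) (Fin m₁) ℂ) (B : Matrix (Fin m₂) (Fin m₂) ℂ) :
    pt₂ (A ⊗ₖ B) = A ⊗ₖ Bᵀ :=
  rfl

theorem continuous_pt₂ : Continuous (@pt₂ m₁ m₂) :=
  continuous_pi fun _ => continuous_pi fun _ => continuous_id.matrix_elem _ _

theorem IsSepState.posSemidef_pt₂ {ρ : Matrix (Fin m₁ × Fin m₂) (Fin m₁ × Fin m₂) ℂ}
    (h : IsSepState ρ) : (pt₂ ρ).PosSemidef := by
  have hclosed : IsClosed (@pt₂ m₁ m₂ ⁻¹' {M | M.PosSemidef}) :=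
    isClosed_setOf_posSemidef.preimage continuous_pt₂
  have hconvex : Convex ℝ (@pt₂ m₁ m₂ ⁻¹' {M | M.PosSemidef}) :=
    fun _ hA _ hB _ _ ha hb hab => convex_setOf_posSemidef hA hB ha hb hab
  refine closure_minimal (convexHull_min ?_ hconvex) hclosed h
  rintro _ ⟨A, B, hA, hB, rfl⟩
  show (pt₂ (A ⊗ₖ B)).PosSemidef
  rw [pt₂_kronecker]
  exact hA.1.kronecker hB.1.transpose

theorem star_dotProduct_pt₂_proj_mulVec (Ψ x : Fin m₁ × Fin m₂ → ℂ) :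
    star x ⬝ᵥ pt₂ (proj Ψ) *ᵥ x =
      ∑ μ, ∑ ν, (∑ k, star (x (k, μ)) * Ψ (k, ν)) * star (∑ k, star (x (k, ν)) * Ψ (k, μ)) := by
  simp only [dotProduct, mulVec, Fintype.sum_prod_type, Pi.star_apply, pt₂, proj, star_sum,
    star_mul', star_star, Finset.mul_sum, Finset.sum_mul]
  rw [Finset.sum_comm]
  refine Finset.sum_congr rfl fun μ _ => ?_
  rw [Finset.sum_comm_cycle]
  refine Finset.sum_congr rfl fun ν _ => ?_
  rw [Finset.sum_comm]
  exact Finset.sum_congr rfl fun l _ => Finset.sum_congr rfl fun k _ => by ring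

theorem mul_eq_mul_of_posSemidef_pt₂ {Ψ : Fin m₁ × Fin m₂ → ℂ} (h : (pt₂ (proj Ψ)).PosSemidef)
    (i j : Fin m₁) (μ ν : Fin m₂) : Ψ (i, μ) * Ψ (j, ν) = Ψ (j, μ) * Ψ (i, ν) := by
  let x : Fin m₁ × Fin m₂ → ℂ := fun p =>
    star ((if p.1 = j then Ψ (i, p.2) else 0) - if p.1 = i then Ψ (j, p.2) else 0)
  have hx : ∀ μ ν, ∑ k, star (x (k, μ)) * Ψ (k, ν) = Ψ (i, μ) * Ψ (j, ν) - Ψ (j, μ) * Ψ (i, ν) := by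
    intro μ ν
    simp [x, sub_mul, ite_mul, Finset.sum_sub_distrib]
  have hminors := eq_zero_of_nonneg_sum_mul_star_swap
    (fun μ ν => Ψ (i, μ) * Ψ (j, ν) - Ψ (j, μ) * Ψ (i, ν)) (fun _ _ => by ring)
    (by simpa only [star_dotProduct_pt₂_proj_mulVec, hx] using h.dotProduct_mulVec_nonneg x)
  exact sub_eq_zero.mp (congrFun (congrFun hminors μ) ν)

theorem exists_eq_tens_of_posSemidef_pt₂ {Ψ : Fin m₁ × Fin m₂ → ℂ}
    (h : (pt₂ (proj Ψ)).PosSemidef) : ∃ (ψ : Fin m₁ → ℂ) (φ : Fin m₂ → ℂ), Ψ = tens ψ φ := by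
  obtain ⟨ψ, φ, hΨ⟩ :=
    exists_eq_mul_of_mul_eq_mul (fun i μ => Ψ (i, μ)) (mul_eq_mul_of_posSemidef_pt₂ h)
  exact ⟨ψ, φ, funext fun p => hΨ p.1 p.2⟩

end PartialTranspose

section Separable

variable {m₁ m₂ : ℕ}

theorem isSepState_kronecker {A : Matrix (Fin m₁) (Fin m₁) ℂ} {B : Matrix (Fin m₂) (Fin m₂) ℂ}
    (hA : A.PosSemidef) (hB : B.PosSemidef) (h : (A ⊗ₖ B).trace = 1) :
    IsSepState (A ⊗ₖ B) := by
  rw [trace_kronecker] at h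
  have ha : A.trace ≠ 0 := left_ne_zero_of_mul_eq_one h
  have hA' : IsState (A.trace⁻¹ • A) :=
    ⟨hA.smul (inv_nonneg.mpr hA.trace_nonneg), by rw [trace_smul, smul_eq_mul, inv_mul_cancel₀ ha]⟩
  have hB' : IsState (A.trace • B) := ⟨hB.smul hA.trace_nonneg, by rw [trace_smul, smul_eq_mul, h]⟩
  have hAB : A ⊗ₖ B = (A.trace⁻¹ • A) ⊗ₖ (A.trace • B) := by
    rw [smul_kronecker, kronecker_smul, smul_smul, inv_mul_cancel₀ ha, one_smul]
  exact subset_closure (subset_convexHull ℝ _ ⟨_, _, hA', hB', hAB⟩)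

theorem proj_tens (ψ : Fin m₁ → ℂ) (φ : Fin m₂ → ℂ) : proj (tens ψ φ) = proj ψ ⊗ₖ proj φ := by
  ext ⟨i, μ⟩ ⟨j, ν⟩
  simp only [proj, tens, kroneckerMap_apply, star_mul']
  ring

theorem isSepState_proj_tens {ψ : Fin m₁ → ℂ} {φ : Fin m₂ → ℂ}
    (h : (proj (tens ψ φ)).trace = 1) : IsSepState (proj (tens ψ φ)) := by
  rw [proj_tens] at h ⊢
  exact isSepState_kronecker (posSemidef_proj ψ) (posSemidef_proj φ) h

end Separable

/-- For a pure state `P_Ψ` on `ℂ^{m₁} ⊗ ℂ^{m₂}`: separability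
of `P_Ψ` is equivalent to positive semidefiniteness of its partial
transposition, and both are equivalent to `Ψ` being a product vector. -/
theorem pure_state_separable_iff (m₁ m₂ : ℕ) (Ψ : Fin m₁ × Fin m₂ → ℂ)
    (hΨ : ∑ p, ‖Ψ p‖ ^ 2 = 1) :
    (IsSepState (proj Ψ) ↔ (pt₂ (proj Ψ)).PosSemidef) ∧
    (IsSepState (proj Ψ) ↔ ∃ (ψ : Fin m₁ → ℂ) (φ : Fin m₂ → ℂ), Ψ = tens ψ φ) := by
  have htrace : (proj Ψ).trace = 1 := by
    rw [trace_proj]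
    exact_mod_cast hΨ
  have hsep_of_tens :
      (∃ (ψ : Fin m₁ → ℂ) (φ : Fin m₂ → ℂ), Ψ = tens ψ φ) → IsSepState (proj Ψ) := by
    rintro ⟨ψ, φ, rfl⟩
    exact isSepState_proj_tens htrace
  exact ⟨⟨IsSepState.posSemidef_pt₂, fun h => hsep_of_tens (exists_eq_tens_of_posSemidef_pt₂ h)⟩,
    ⟨fun h => exists_eq_tens_of_posSemidef_pt₂ h.posSemidef_pt₂, hsep_of_tens⟩⟩
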